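/- arXiv:1102.1101 — 3 statements merged into one kernel-verified Lean document; each statement's English description precedes it below -/
import Mathlib

section
/- Strong duality for the ROF problem: min_v (½‖w − v‖² + λ TV(v)) = ½ max over z ∈ K of (‖w‖² − ‖λ div z + w‖²), where K = {z: Ω → ℝ³ | ‖z(ω)‖ ≤ 1 ∀ω}, and the optimal primal variable is v* = w + λ div z* for any dual optimizer z*. -/
/-!
Weak duality comes from the gap identity
`P v - D z = ∑ ω, (½ (v - w - λ div z)² + λ (‖∇v‖ - ⟪∇v, z⟫))`,
obtained from the adjointness of `grad` and `div`: both summands are nonnegative for `z ∈ K`.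
A dual maximizer `z*` exists by compactness of `K`. Since `D z*` is the least value of the convex
quadratic `‖λ div z + w‖²` on the convex set `K`, the first-order condition says, through adjointness,
that `z*` maximizes `z ↦ ⟪∇v*, z⟫` on `K` for `v* = w + λ div z*`; this maximum is `TV v*`, so both
summands of the gap vanish at `(v*, z*)`.
-/

open scoped RealInnerProductSpace
open Finset Filter Topology

section RudinOsherFatemi

variable {Ω : Type*} {E : Type*} [NormedAddCommGroup E]

section InnerProductSpace

variable [InnerProductSpace ℝ E]

lemma real_inner_le_norm_of_norm_le_one (x : E) {z : E} (hz : ‖z‖ ≤ 1) : ⟪x, z⟫ ≤ ‖x‖ :=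
  (real_inner_le_norm x z).trans (mul_le_of_le_one_right (norm_nonneg x) hz)

lemma exists_norm_le_one_inner_eq_norm (x : E) : ∃ z : E, ‖z‖ ≤ 1 ∧ ⟪x, z⟫ = ‖x‖ := by
  by_cases hx : x = 0
  · exact ⟨0, by simp, by simp [hx]⟩
  · refine ⟨(‖x‖⁻¹ : ℝ) • x, (norm_smul_inv_norm hx).le, ?_⟩
    have hx' : ‖x‖ ≠ 0 := norm_ne_zero_iff.mpr hx
    rw [real_inner_smul_right, real_inner_self_eq_norm_sq]
    field_simp

end InnerProductSpace

lemma nonneg_of_forall_mul_add_sq_mul_nonneg {a b : ℝ}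
    (h : ∀ t ∈ Set.Ioc (0 : ℝ) 1, 0 ≤ t * a + t ^ 2 * b) : 0 ≤ a := by
  have hlim : Tendsto (fun t : ℝ => a + t * b) (𝓝[>] 0) (𝓝 a) := by
    have : Continuous fun t : ℝ => a + t * b := by fun_prop
    simpa using (this.tendsto 0).mono_left nhdsWithin_le_nhds
  refine ge_of_tendsto hlim ?_
  filter_upwards [Ioc_mem_nhdsGT (zero_lt_one' ℝ)] with t ht
  have := h t ht
  nlinarith [ht.1]

lemma sum_mul_nonneg_of_isMinOn [Fintype Ω] {V : Type*} [AddCommGroup V] [Module ℝ V]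
    {A : V →ₗ[ℝ] Ω → ℝ} {w : Ω → ℝ} {K : Set V} (hK : Convex ℝ K) {x y : V}
    (hx : x ∈ K) (hy : y ∈ K) (hmin : IsMinOn (fun x => ∑ ω, (A x ω + w ω) ^ 2) K x) :
    0 ≤ ∑ ω, (A x ω + w ω) * A (y - x) ω := by
  have key : 0 ≤ 2 * ∑ ω, (A x ω + w ω) * A (y - x) ω := by
    refine nonneg_of_forall_mul_add_sq_mul_nonneg (b := ∑ ω, A (y - x) ω ^ 2) fun t ht => ?_
    have hmem := hK.add_smul_sub_mem hx hy (Set.Ioc_subset_Icc_self ht)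
    have hle := isMinOn_iff.mp hmin _ hmem
    have expand : ∀ ω, (A (x + t • (y - x)) ω + w ω) ^ 2 = (A x ω + w ω) ^ 2
        + t * (2 * ((A x ω + w ω) * A (y - x) ω)) + t ^ 2 * A (y - x) ω ^ 2 := by
      intro ω
      simp only [map_add, map_smul, Pi.add_apply, Pi.smul_apply, smul_eq_mul]
      ring
    simp only [expand, sum_add_distrib, ← mul_sum] at hle
    linarith
  linarith

section PointwiseUnitBall

variable (Ω E) in
def pointwiseUnitBall : Set (Ω → E) := {z | ∀ ω, ‖z ω‖ ≤ 1}

lemma pointwiseUnitBall_eq_pi :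
    pointwiseUnitBall Ω E = Set.univ.pi fun _ => Metric.closedBall 0 1 := by
  ext z
  simp [pointwiseUnitBall]

lemma convex_pointwiseUnitBall [NormedSpace ℝ E] : Convex ℝ (pointwiseUnitBall Ω E) := by
  rw [pointwiseUnitBall_eq_pi]
  exact convex_pi fun _ _ => convex_closedBall 0 1

lemma isCompact_pointwiseUnitBall [NormedSpace ℝ E] [FiniteDimensional ℝ E] :
    IsCompact (pointwiseUnitBall Ω E) := by
  rw [pointwiseUnitBall_eq_pi]
  exact isCompact_univ_pi fun _ => isCompact_closedBall 0 1

lemma zero_mem_pointwiseUnitBall : (0 : Ω → E) ∈ pointwiseUnitBall Ω E := fun _ => by simp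

variable [Fintype Ω] [InnerProductSpace ℝ E]

lemma sum_inner_le_sum_norm (g : Ω → E) {z : Ω → E} (hz : z ∈ pointwiseUnitBall Ω E) :
    ∑ ω, ⟪g ω, z ω⟫ ≤ ∑ ω, ‖g ω‖ :=
  sum_le_sum fun ω _ => real_inner_le_norm_of_norm_le_one (g ω) (hz ω)

lemma sum_inner_eq_sum_norm_of_isMaxOn {g z : Ω → E} (hz : z ∈ pointwiseUnitBall Ω E)
    (hmax : IsMaxOn (fun z => ∑ ω, ⟪g ω, z ω⟫) (pointwiseUnitBall Ω E) z) :
    ∑ ω, ⟪g ω, z ω⟫ = ∑ ω, ‖g ω‖ := by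
  choose z₀ hz₀ hinner using fun ω => exists_norm_le_one_inner_eq_norm (g ω)
  refine (sum_inner_le_sum_norm g hz).antisymm ?_
  calc ∑ ω, ‖g ω‖ = ∑ ω, ⟪g ω, z₀ ω⟫ := by simp only [hinner]
    _ ≤ ∑ ω, ⟪g ω, z ω⟫ := isMaxOn_iff.mp hmax z₀ hz₀

end PointwiseUnitBall

section ROF

variable [Fintype Ω] [InnerProductSpace ℝ E]
variable (grad : (Ω → ℝ) →ₗ[ℝ] (Ω → E)) (dvg : (Ω → E) →ₗ[ℝ] (Ω → ℝ)) (lam : ℝ) (w : Ω → ℝ)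

noncomputable def totalVariation (v : Ω → ℝ) : ℝ := ∑ ω, ‖grad v ω‖

noncomputable def rofPrimal (v : Ω → ℝ) : ℝ :=
  (1 / 2) * ∑ ω, (w ω - v ω) ^ 2 + lam * totalVariation grad v

noncomputable def rofDual (z : Ω → E) : ℝ :=
  (1 / 2) * (∑ ω, w ω ^ 2 - ∑ ω, (lam * dvg z ω + w ω) ^ 2)

def IsNegAdjoint : Prop := ∀ v z, ∑ ω, ⟪grad v ω, z ω⟫ = - ∑ ω, v ω * dvg z ω

variable {grad dvg lam}

lemma rofPrimal_sub_rofDual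
    (hadj : IsNegAdjoint grad dvg) (v : Ω → ℝ) (z : Ω → E) :
    rofPrimal grad lam w v - rofDual dvg lam w z =
      ∑ ω, ((1 / 2) * (v ω - w ω - lam * dvg z ω) ^ 2 + lam * (‖grad v ω‖ - ⟪grad v ω, z ω⟫)) := by
  have expand : ∀ ω, (1 / 2) * (v ω - w ω - lam * dvg z ω) ^ 2
      + lam * (‖grad v ω‖ - ⟪grad v ω, z ω⟫) = (1 / 2) * (w ω - v ω) ^ 2 + lam * ‖grad v ω‖
        - (1 / 2) * w ω ^ 2 + (1 / 2) * (lam * dvg z ω + w ω) ^ 2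
        - lam * (v ω * dvg z ω) - lam * ⟪grad v ω, z ω⟫ := fun ω => by ring
  simp only [rofPrimal, totalVariation, rofDual, expand, sum_sub_distrib, sum_add_distrib,
    ← mul_sum, hadj v z]
  ring

lemma rofDual_le_rofPrimal
    (hadj : IsNegAdjoint grad dvg) (hlam : 0 ≤ lam)
    {z : Ω → E} (hz : z ∈ pointwiseUnitBall Ω E) (v : Ω → ℝ) :
    rofDual dvg lam w z ≤ rofPrimal grad lam w v := by
  rw [← sub_nonneg, rofPrimal_sub_rofDual w hadj]
  refine sum_nonneg fun ω _ => add_nonneg (by positivity) (mul_nonneg hlam ?_)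
  exact sub_nonneg.mpr (real_inner_le_norm_of_norm_le_one _ (hz ω))

lemma exists_isMaxOn_rofDual [FiniteDimensional ℝ E] :
    ∃ z ∈ pointwiseUnitBall Ω E, IsMaxOn (rofDual dvg lam w) (pointwiseUnitBall Ω E) z := by
  have hdvg : Continuous dvg := dvg.continuous_of_finiteDimensional
  have hcont : Continuous (rofDual dvg lam w) := by unfold rofDual; fun_prop
  exact isCompact_pointwiseUnitBall.exists_isMaxOn ⟨0, zero_mem_pointwiseUnitBall⟩
    hcont.continuousOn

lemma isMaxOn_sum_inner_grad_of_isMaxOn_rofDual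
    (hadj : IsNegAdjoint grad dvg) (hlam : 0 < lam)
    {zstar : Ω → E} (hzstar : zstar ∈ pointwiseUnitBall Ω E)
    (hmax : IsMaxOn (rofDual dvg lam w) (pointwiseUnitBall Ω E) zstar) :
    IsMaxOn (fun z => ∑ ω, ⟪grad (w + lam • dvg zstar) ω, z ω⟫) (pointwiseUnitBall Ω E) zstar := by
  have hmin : IsMinOn (fun z => ∑ ω, ((lam • dvg) z ω + w ω) ^ 2) (pointwiseUnitBall Ω E) zstar :=
    isMinOn_iff.mpr fun z hz => by
      have hle := isMaxOn_iff.mp hmax z hz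
      simp only [rofDual] at hle
      simp only [LinearMap.smul_apply, Pi.smul_apply, smul_eq_mul]
      linarith
  refine isMaxOn_iff.mpr fun z hz => ?_
  set vstar := w + lam • dvg zstar
  have hfoc : 0 ≤ lam * ∑ ω, vstar ω * dvg (z - zstar) ω := by
    rw [mul_sum]
    refine (sum_mul_nonneg_of_isMinOn convex_pointwiseUnitBall hzstar hz hmin).trans_eq ?_
    refine sum_congr rfl fun ω _ => ?_
    simp only [vstar, LinearMap.smul_apply, Pi.add_apply, Pi.smul_apply, smul_eq_mul]
    ring
  have hdesc : ∑ ω, ⟪grad vstar ω, z ω - zstar ω⟫ ≤ 0 := by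
    have hadj' := hadj vstar (z - zstar)
    simp only [Pi.sub_apply] at hadj'
    linarith [(mul_nonneg_iff_of_pos_left hlam).mp hfoc]
  simpa only [inner_sub_right, sum_sub_distrib, sub_nonpos] using hdesc

lemma rofPrimal_eq_rofDual_of_isMaxOn
    (hadj : IsNegAdjoint grad dvg) (hlam : 0 < lam)
    {zstar : Ω → E} (hzstar : zstar ∈ pointwiseUnitBall Ω E)
    (hmax : IsMaxOn (rofDual dvg lam w) (pointwiseUnitBall Ω E) zstar) :
    rofPrimal grad lam w (w + lam • dvg zstar) = rofDual dvg lam w zstar := by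
  have htv := sum_inner_eq_sum_norm_of_isMaxOn hzstar
    (isMaxOn_sum_inner_grad_of_isMaxOn_rofDual w hadj hlam hzstar hmax)
  have hfit : ∀ ω, (w + lam • dvg zstar) ω - w ω - lam * dvg zstar ω = 0 := fun ω => by simp
  rw [← sub_eq_zero, rofPrimal_sub_rofDual w hadj]
  simp only [hfit, zero_pow two_ne_zero, mul_zero, zero_add, ← mul_sum, sum_sub_distrib, htv,
    sub_self]

end ROF

end RudinOsherFatemi

/-- Strong duality for the ROF problem:
`min_v (½‖w − v‖² + λ TV(v)) = ½ max_{z ∈ K} (‖w‖² − ‖λ div z + w‖²)`,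
and the primal optimum is `v* = w + λ div z*` for any dual optimizer `z*`. -/
theorem rof_strong_duality (Ω : Type*) [Fintype Ω]
    (grad : (Ω → ℝ) →ₗ[ℝ] (Ω → EuclideanSpace ℝ (Fin 3)))
    (dvg : (Ω → EuclideanSpace ℝ (Fin 3)) →ₗ[ℝ] (Ω → ℝ))
    (hadj : ∀ (v : Ω → ℝ) (z : Ω → EuclideanSpace ℝ (Fin 3)),
      ∑ ω : Ω, (inner ℝ (grad v ω) (z ω) : ℝ) = - ∑ ω : Ω, v ω * dvg z ω)
    (lam : ℝ) (hlam : 0 < lam) (w : Ω → ℝ)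
    (TV : (Ω → ℝ) → ℝ) (hTV : ∀ v, TV v = ∑ ω : Ω, ‖grad v ω‖)
    (P : (Ω → ℝ) → ℝ)
    (hP : ∀ v, P v = (1 / 2) * ∑ ω : Ω, (w ω - v ω) ^ 2 + lam * TV v)
    (D : (Ω → EuclideanSpace ℝ (Fin 3)) → ℝ)
    (hD : ∀ z, D z = (1 / 2) * (∑ ω : Ω, (w ω) ^ 2 - ∑ ω : Ω, (lam * dvg z ω + w ω) ^ 2)) :
    (∃ zstar : Ω → EuclideanSpace ℝ (Fin 3), (∀ ω, ‖zstar ω‖ ≤ 1) ∧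
      ∀ z, (∀ ω, ‖z ω‖ ≤ 1) → D z ≤ D zstar) ∧
    ∀ zstar : Ω → EuclideanSpace ℝ (Fin 3), (∀ ω, ‖zstar ω‖ ≤ 1) →
      (∀ z, (∀ ω, ‖z ω‖ ≤ 1) → D z ≤ D zstar) →
      (∀ v : Ω → ℝ, P (w + lam • dvg zstar) ≤ P v) ∧
      P (w + lam • dvg zstar) = D zstar := by
  obtain rfl : TV = totalVariation grad := funext hTV
  obtain rfl : P = rofPrimal grad lam w := funext hP
  obtain rfl : D = rofDual dvg lam w := funext hD
  refine ⟨?_, fun zstar hzstar hmax => ?_⟩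
  · obtain ⟨zstar, hzstar, hmax⟩ := exists_isMaxOn_rofDual (dvg := dvg) (lam := lam) w
    exact ⟨zstar, hzstar, isMaxOn_iff.mp hmax⟩
  · have hgap := rofPrimal_eq_rofDual_of_isMaxOn w hadj hlam hzstar (isMaxOn_iff.mpr hmax)
    exact ⟨fun v => hgap ▸ rofDual_le_rofPrimal w hadj hlam.le hzstar v, hgap⟩
end

section
/- Weak duality / duality gap nonnegativity for ROF: for any z ∈ K and v = w + λ div z, the quantity δ(v) = ½‖w − v‖² + λ TV(v) − ½(‖w‖² − ‖v‖²) is nonnegative, and δ(v*) = 0 at the optimum v* = prox_{λTV}(w). -/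
/-!
Write `δ(v) = ⟨v, v − w⟩ + λ TV(v)`. If `v = w + λ div z` with `‖z‖ ≤ 1` pointwise, then
`⟨v, v − w⟩ = λ ⟨v, div z⟩ = −λ ⟨grad v, z⟩ ≥ −λ TV(v)` by Cauchy–Schwarz. At the minimiser `v*`,
positive homogeneity of `TV` makes `t ↦ ½‖w − (1 + t) v*‖² + λ TV((1 + t) v*)` a quadratic in `t`
near `t = 0` with a minimum at `0`; its slope there is `δ(v*)`, which therefore vanishes.
-/

open Finset Filter Topology

theorem eq_zero_of_eventually_nonneg_mul_add_mul_sq {b c : ℝ}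
    (h : ∀ᶠ t in 𝓝 (0 : ℝ), 0 ≤ b * t + c * t ^ 2) : b = 0 := by
  have hmin : IsLocalMin (fun t : ℝ => b * t + c * t ^ 2) 0 := by
    filter_upwards [h] with t ht
    simpa using ht
  have hderiv : HasDerivAt (fun t : ℝ => b * t + c * t ^ 2) b 0 := by
    simpa using
      ((hasDerivAt_id (0 : ℝ)).const_mul b).fun_add ((hasDerivAt_pow 2 (0 : ℝ)).const_mul c)
  exact hmin.hasDerivAt_eq_zero hderiv

theorem sum_inner_le_sum_norm_s10 {Ω E : Type*} [Fintype Ω] [NormedAddCommGroup E]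
    [InnerProductSpace ℝ E] (f z : Ω → E) (hz : ∀ ω, ‖z ω‖ ≤ 1) :
    ∑ ω, inner ℝ (f ω) (z ω) ≤ ∑ ω, ‖f ω‖ :=
  sum_le_sum fun ω _ => calc
    inner ℝ (f ω) (z ω) ≤ ‖f ω‖ * ‖z ω‖ := real_inner_le_norm _ _
    _ ≤ ‖f ω‖ := mul_le_of_le_one_right (norm_nonneg _) (hz ω)

section ROF

variable {Ω : Type*} [Fintype Ω]

theorem half_sum_sq_sub_sub_half_sub_sum_sq (w v : Ω → ℝ) :
    (1 / 2) * ∑ ω, (w ω - v ω) ^ 2 - (1 / 2) * (∑ ω, w ω ^ 2 - ∑ ω, v ω ^ 2)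
      = ∑ ω, v ω * (v ω - w ω) := by
  rw [← sum_sub_distrib, mul_sum, mul_sum, ← sum_sub_distrib]
  exact sum_congr rfl fun ω _ => by ring

theorem sum_sq_sub_one_add_smul (w v : Ω → ℝ) (t : ℝ) :
    ∑ ω, (w ω - ((1 + t) • v) ω) ^ 2
      = ∑ ω, (w ω - v ω) ^ 2 + 2 * t * ∑ ω, v ω * (v ω - w ω) + t ^ 2 * ∑ ω, v ω ^ 2 := by
  rw [mul_sum, mul_sum, ← sum_add_distrib, ← sum_add_distrib]
  exact sum_congr rfl fun ω _ => by simp only [Pi.smul_apply, smul_eq_mul]; ring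

theorem sum_norm_map_smul_of_nonneg {E : Type*} [NormedAddCommGroup E] [NormedSpace ℝ E]
    (grad : (Ω → ℝ) →ₗ[ℝ] (Ω → E)) {s : ℝ} (hs : 0 ≤ s) (v : Ω → ℝ) :
    ∑ ω, ‖grad (s • v) ω‖ = s * ∑ ω, ‖grad v ω‖ := by
  simp only [map_smul, Pi.smul_apply, norm_smul, Real.norm_of_nonneg hs, mul_sum]

theorem sum_mul_sub_add_eq_zero_of_isMinimizer {J : (Ω → ℝ) → ℝ}
    (hJ : ∀ s : ℝ, 0 ≤ s → ∀ u, J (s • u) = s * J u) (w v : Ω → ℝ)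
    (hmin : ∀ u, (1 / 2) * ∑ ω, (w ω - v ω) ^ 2 + J v ≤ (1 / 2) * ∑ ω, (w ω - u ω) ^ 2 + J u) :
    ∑ ω, v ω * (v ω - w ω) + J v = 0 := by
  refine eq_zero_of_eventually_nonneg_mul_add_mul_sq (c := (1 / 2) * ∑ ω, v ω ^ 2) ?_
  filter_upwards [Ioi_mem_nhds (show (-1 : ℝ) < 0 by norm_num)] with t ht
  have hray := hmin ((1 + t) • v)
  rw [hJ _ (by linarith [Set.mem_Ioi.mp ht]), sum_sq_sub_one_add_smul] at hray
  linarith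

theorem sum_mul_sub_add_nonneg_of_eq_add_smul_div {E : Type*} [NormedAddCommGroup E]
    [InnerProductSpace ℝ E] (grad : (Ω → ℝ) →ₗ[ℝ] (Ω → E)) (dvg : (Ω → E) →ₗ[ℝ] (Ω → ℝ))
    (hadj : ∀ v z, ∑ ω, inner ℝ (grad v ω) (z ω) = - ∑ ω, v ω * dvg z ω)
    {lam : ℝ} (hlam : 0 ≤ lam) (w : Ω → ℝ) (z : Ω → E) (hz : ∀ ω, ‖z ω‖ ≤ 1) :
    0 ≤ ∑ ω, (w + lam • dvg z) ω * ((w + lam • dvg z) ω - w ω)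
      + lam * ∑ ω, ‖grad (w + lam • dvg z) ω‖ := by
  set v := w + lam • dvg z
  have hpair : ∑ ω, v ω * (v ω - w ω) = - lam * ∑ ω, inner ℝ (grad v ω) (z ω) := by
    rw [hadj, neg_mul_neg, mul_sum]
    exact sum_congr rfl fun ω _ => by simp only [v, Pi.add_apply, Pi.smul_apply, smul_eq_mul]; ring
  rw [hpair, neg_mul, neg_add_eq_sub, sub_nonneg]
  exact mul_le_mul_of_nonneg_left (sum_inner_le_sum_norm_s10 _ z hz) hlam

end ROF

/-- Weak duality / nonnegativity of the duality gap for the ROF problem: for any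
`z ∈ K` and `v = w + λ div z`, the gap
`δ(v) = ½‖w − v‖² + λ TV(v) − ½(‖w‖² − ‖v‖²)` is nonnegative, and it vanishes at
the optimum `v* = prox_{λTV}(w)`. -/
theorem rof_duality_gap_nonneg (Ω : Type*) [Fintype Ω]
    (grad : (Ω → ℝ) →ₗ[ℝ] (Ω → EuclideanSpace ℝ (Fin 3)))
    (dvg : (Ω → EuclideanSpace ℝ (Fin 3)) →ₗ[ℝ] (Ω → ℝ))
    (hadj : ∀ (v : Ω → ℝ) (z : Ω → EuclideanSpace ℝ (Fin 3)),
      ∑ ω : Ω, (inner ℝ (grad v ω) (z ω) : ℝ) = - ∑ ω : Ω, v ω * dvg z ω)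
    (lam : ℝ) (hlam : 0 < lam) (w : Ω → ℝ)
    (TV : (Ω → ℝ) → ℝ) (hTV : ∀ v, TV v = ∑ ω : Ω, ‖grad v ω‖)
    (δ : (Ω → ℝ) → ℝ)
    (hδ : ∀ v, δ v = (1 / 2) * ∑ ω : Ω, (w ω - v ω) ^ 2 + lam * TV v
      - (1 / 2) * (∑ ω : Ω, (w ω) ^ 2 - ∑ ω : Ω, (v ω) ^ 2)) :
    (∀ z : Ω → EuclideanSpace ℝ (Fin 3), (∀ ω, ‖z ω‖ ≤ 1) →
      0 ≤ δ (w + lam • dvg z)) ∧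
    ∀ vstar : Ω → ℝ,
      (∀ u : Ω → ℝ, (1 / 2) * ∑ ω : Ω, (w ω - vstar ω) ^ 2 + lam * TV vstar
        ≤ (1 / 2) * ∑ ω : Ω, (w ω - u ω) ^ 2 + lam * TV u) →
      δ vstar = 0 := by
  have hgap : ∀ v, δ v = ∑ ω, v ω * (v ω - w ω) + lam * TV v := fun v => by
    rw [hδ, ← half_sum_sq_sub_sub_half_sub_sum_sq]; ring
  refine ⟨fun z hz => ?_, fun vstar hmin => ?_⟩
  · rw [hgap, hTV]
    exact sum_mul_sub_add_nonneg_of_eq_add_smul_div grad dvg hadj hlam.le w z hz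
  · rw [hgap]
    refine sum_mul_sub_add_eq_zero_of_isMinimizer (J := fun u => lam * TV u) ?_ w vstar hmin
    intro s hs u
    rw [hTV, hTV, sum_norm_map_smul_of_nonneg grad hs]
    ring
end

section
/- ISTA O(1/k) convergence rate: for F(w) = L(w) + λJ(w) with L convex differentiable having L-Lipschitz gradient, J proper convex lsc, and a minimizer w* of F, the ISTA iterates satisfy F(w⁽ᵏ⁾) − F(w*) ≤ L‖w⁽⁰⁾ − w*‖²/(2k) for all k ≥ 1. -/
/-!
The ISTA step minimises the `c`-strongly convex model `⟪∇L(x), v - x⟫ + c/2 ‖v - x‖² + λ J(v)`,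
so its minimiser `y` beats every `u` by at least `c/2 ‖u - y‖²`. Bounding `L y` from above by the
descent lemma and `L u` from below by convexity turns this into
`F y ≤ F u + c/2 (‖x - u‖² - ‖y - u‖²)`. With `u = x` the values `F (w k)` decrease; with `u = w*`
the right-hand sides telescope, so `k (F (w k) - F w*) ≤ ∑_{i<k} (F (w (i+1)) - F w*) ≤ c/2 ‖w 0 - w*‖²`.
-/

open Set Filter Topology

section

variable {E : Type*} [NormedAddCommGroup E]

lemma StrongConvexOn.add_sq_le_of_isMinOn [NormedSpace ℝ E] {s : Set E} {m : ℝ} {f : E → ℝ}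
    (hf : StrongConvexOn s m f) {y u : E} (hy : y ∈ s) (hu : u ∈ s) (hmin : IsMinOn f s y) :
    f y + m / 2 * ‖u - y‖ ^ 2 ≤ f u := by
  have hseg : ∀ t ∈ Ioo (0 : ℝ) 1, f y ≤ f u - (1 - t) * (m / 2 * ‖u - y‖ ^ 2) := by
    rintro t ⟨ht0, ht1⟩
    have hconv := hf.2 hy hu (sub_nonneg.2 ht1.le) ht0.le (sub_add_cancel 1 t)
    have hle : f y ≤ f ((1 - t) • y + t • u) :=
      hmin (hf.1 hy hu (sub_nonneg.2 ht1.le) ht0.le (sub_add_cancel 1 t))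
    rw [norm_sub_rev, smul_eq_mul, smul_eq_mul] at hconv
    refine le_of_mul_le_mul_left ?_ ht0
    linarith
  have hlim : Tendsto (fun t : ℝ => f u - (1 - t) * (m / 2 * ‖u - y‖ ^ 2)) (𝓝[>] 0)
      (𝓝 (f u - (1 - 0) * (m / 2 * ‖u - y‖ ^ 2))) :=
    ((continuous_const.sub ((continuous_const.sub continuous_id).mul continuous_const)).tendsto
      0).mono_left nhdsWithin_le_nhds
  have := ge_of_tendsto hlim (mem_of_superset (Ioo_mem_nhdsGT one_pos) hseg)
  linarith

variable [InnerProductSpace ℝ E]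

lemma ConvexOn.strongConvexOn_half_sq_norm_sub_add {s : Set E} {g : E → ℝ}
    (hg : ConvexOn ℝ s g) (z : E) :
    StrongConvexOn s 1 (fun v => 1 / 2 * ‖v - z‖ ^ 2 + g v) := by
  rw [strongConvexOn_iff_convex]
  have hlin : ConvexOn ℝ s fun v => -inner ℝ z v + 1 / 2 * ‖z‖ ^ 2 :=
    ((-innerSL ℝ z : E →L[ℝ] ℝ).toLinearMap.convexOn hg.1).add_const _
  refine (hg.add hlin).congr fun v _ => ?_
  rw [Pi.add_apply, norm_sub_sq_real, real_inner_comm]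
  ring

lemma ista_three_point {J : E → ℝ} (hJ : ConvexOn ℝ univ J) {c lam : ℝ} (hc : 0 < c)
    (hlam : 0 ≤ lam) {g x y : E}
    (hy : ∀ u, 1 / 2 * ‖y - (x - (1 / c) • g)‖ ^ 2 + lam / c * J y
      ≤ 1 / 2 * ‖u - (x - (1 / c) • g)‖ ^ 2 + lam / c * J u) (u : E) :
    c / 2 * ‖y - x‖ ^ 2 + inner ℝ g (y - x) + lam * J y + c / 2 * ‖u - y‖ ^ 2
      ≤ c / 2 * ‖u - x‖ ^ 2 + inner ℝ g (u - x) + lam * J u := by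
  have hstrong := (hJ.smul (div_nonneg hlam hc.le)).strongConvexOn_half_sq_norm_sub_add
    (x - (1 / c) • g)
  have hmin := hstrong.add_sq_le_of_isMinOn (mem_univ y) (mem_univ u) fun v _ => hy v
  have hexp : ∀ v, ‖v - (x - (1 / c) • g)‖ ^ 2
      = ‖v - x‖ ^ 2 + 2 / c * inner ℝ g (v - x) + (1 / c) ^ 2 * ‖g‖ ^ 2 := fun v => by
    rw [show v - (x - (1 / c) • g) = (v - x) + (1 / c) • g by abel, norm_add_sq_real,
      real_inner_smul_right, norm_smul, Real.norm_of_nonneg (by positivity), real_inner_comm]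
    ring
  simp only [smul_eq_mul, hexp] at hmin
  -- `hmin` is now the claim divided by `c`, plus `‖g‖² / (2 c²)` on both sides
  field_simp at hmin
  nlinarith

variable [CompleteSpace E] {L : E → ℝ}

lemma HasGradientAt.hasDerivAt_comp_lineMap {g x u : E} {t : ℝ}
    (hL : HasGradientAt L g (AffineMap.lineMap x u t)) :
    HasDerivAt (L ∘ AffineMap.lineMap x u) (inner ℝ g (u - x)) t := by
  simpa using hL.hasFDerivAt.comp_hasDerivAt t AffineMap.hasDerivAt_lineMap

lemma ConvexOn.add_inner_gradient_le (hL : ConvexOn ℝ univ L) {g x : E}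
    (hg : HasGradientAt L g x) (u : E) :
    L x + inner ℝ g (u - x) ≤ L u := by
  have hline : ConvexOn ℝ univ (L ∘ AffineMap.lineMap (k := ℝ) x u) := by
    simpa using hL.comp_affineMap (AffineMap.lineMap x u : ℝ →ᵃ[ℝ] E)
  have hderiv : HasDerivAt (L ∘ AffineMap.lineMap x u) (inner ℝ g (u - x)) (0 : ℝ) :=
    HasGradientAt.hasDerivAt_comp_lineMap (by rwa [AffineMap.lineMap_apply_zero])
  have := hline.le_slope_of_hasDerivAt (mem_univ 0) (mem_univ 1) one_pos hderiv
  simp only [slope_def_field, Function.comp_apply, AffineMap.lineMap_apply_one,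
    AffineMap.lineMap_apply_zero, sub_zero, div_one] at this
  linarith

lemma le_add_inner_gradient_add_sq {G : E → E} (hG : ∀ v, HasGradientAt L (G v) v) {c : ℝ}
    {x : E} (hLip : ∀ v, ‖G v - G x‖ ≤ c * ‖v - x‖) (u : E) :
    L u ≤ L x + inner ℝ (G x) (u - x) + c / 2 * ‖u - x‖ ^ 2 := by
  set d := u - x
  let ψ : ℝ → ℝ := fun t =>
    L (AffineMap.lineMap x u t) - t * inner ℝ (G x) d - c / 2 * t ^ 2 * ‖d‖ ^ 2
  have hψ : ∀ t, HasDerivAt ψ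
      (inner ℝ (G (AffineMap.lineMap x u t)) d - inner ℝ (G x) d - c * t * ‖d‖ ^ 2) t := by
    intro t
    have := (((hG (AffineMap.lineMap x u t)).hasDerivAt_comp_lineMap).sub
      ((hasDerivAt_id t).mul_const (inner ℝ (G x) d))).sub
      (((hasDerivAt_pow 2 t).const_mul (c / 2)).mul_const (‖d‖ ^ 2))
    exact this.congr_deriv (by norm_num; ring)
  have hanti : AntitoneOn ψ (Ici 0) := by
    refine antitoneOn_of_hasDerivWithinAt_nonpos (convex_Ici 0)
      (fun t _ => (hψ t).continuousAt.continuousWithinAt) (fun t _ => (hψ t).hasDerivWithinAt) ?_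
    intro t ht
    rw [interior_Ici] at ht
    have hdist : ‖AffineMap.lineMap x u t - x‖ = t * ‖d‖ := by
      rw [← vsub_eq_sub, AffineMap.lineMap_vsub_left, norm_smul, Real.norm_of_nonneg ht.le]
      rfl
    calc inner ℝ (G (AffineMap.lineMap x u t)) d - inner ℝ (G x) d - c * t * ‖d‖ ^ 2
        = inner ℝ (G (AffineMap.lineMap x u t) - G x) d - c * t * ‖d‖ ^ 2 := by
          rw [inner_sub_left]
      _ ≤ ‖G (AffineMap.lineMap x u t) - G x‖ * ‖d‖ - c * t * ‖d‖ ^ 2 := by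
          gcongr; exact real_inner_le_norm _ _
      _ ≤ c * (t * ‖d‖) * ‖d‖ - c * t * ‖d‖ ^ 2 := by
          gcongr; exact hdist ▸ hLip _
      _ = 0 := by ring
  have := hanti (mem_Ici.2 le_rfl) (zero_le_one' ℝ) zero_le_one
  simp only [ψ, AffineMap.lineMap_apply_one, AffineMap.lineMap_apply_zero] at this
  linarith

lemma ista_step_le {J : E → ℝ} (hL : ConvexOn ℝ univ L) {G : E → E}
    (hG : ∀ v, HasGradientAt L (G v) v) {c lam : ℝ} (hc : 0 < c)
    (hLip : ∀ u v, ‖G u - G v‖ ≤ c * ‖u - v‖) (hJ : ConvexOn ℝ univ J) (hlam : 0 ≤ lam)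
    {x y : E}
    (hy : ∀ u, 1 / 2 * ‖y - (x - (1 / c) • G x)‖ ^ 2 + lam / c * J y
      ≤ 1 / 2 * ‖u - (x - (1 / c) • G x)‖ ^ 2 + lam / c * J u) (u : E) :
    L y + lam * J y ≤ L u + lam * J u + c / 2 * (‖x - u‖ ^ 2 - ‖y - u‖ ^ 2) := by
  have hdescent := le_add_inner_gradient_add_sq hG (fun v => hLip v x) y
  have hconvex := hL.add_inner_gradient_le (hG x) u
  have hthree := ista_three_point hJ hc hlam hy u
  rw [norm_sub_rev x u, norm_sub_rev y u]
  linarith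

end

lemma sub_le_div_of_antitone_of_succ_sub_le {a d : ℕ → ℝ} {b : ℝ} (ha : Antitone a)
    (hd : ∀ k, 0 ≤ d k) (h : ∀ k, a (k + 1) - b ≤ d k - d (k + 1)) {k : ℕ} (hk : 0 < k) :
    a k - b ≤ d 0 / k := by
  rw [le_div_iff₀ (Nat.cast_pos.2 hk)]
  calc (a k - b) * k = ∑ i ∈ Finset.range k, (a k - b) := by
        rw [Finset.sum_const, Finset.card_range, nsmul_eq_mul, mul_comm]
    _ ≤ ∑ i ∈ Finset.range k, (a (i + 1) - b) :=
        Finset.sum_le_sum fun i hi => by linarith [ha (Finset.mem_range.1 hi : i + 1 ≤ k)]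
    _ ≤ ∑ i ∈ Finset.range k, (d i - d (i + 1)) := Finset.sum_le_sum fun i _ => h i
    _ = d 0 - d k := Finset.sum_range_sub' d k
    _ ≤ d 0 := by linarith [hd k]

theorem ista_convergence_rate_general (p : ℕ)
    (L : EuclideanSpace ℝ (Fin p) → ℝ) (hLconv : ConvexOn ℝ Set.univ L)
    (G : EuclideanSpace ℝ (Fin p) → EuclideanSpace ℝ (Fin p))
    (hG : ∀ w, HasGradientAt L (G w) w)
    (c : ℝ) (hc : 0 < c) (hLip : ∀ u v, ‖G u - G v‖ ≤ c * ‖u - v‖)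
    (J : EuclideanSpace ℝ (Fin p) → ℝ) (hJconv : ConvexOn ℝ Set.univ J)
    (lam : ℝ) (hlam : 0 ≤ lam)
    (F : EuclideanSpace ℝ (Fin p) → ℝ) (hF : ∀ u, F u = L u + lam * J u)
    (wstar : EuclideanSpace ℝ (Fin p))
    (w : ℕ → EuclideanSpace ℝ (Fin p))
    (hstep : ∀ k : ℕ, ∀ u,
      1 / 2 * ‖w (k + 1) - (w k - (1 / c) • G (w k))‖ ^ 2 + (lam / c) * J (w (k + 1))
        ≤ 1 / 2 * ‖u - (w k - (1 / c) • G (w k))‖ ^ 2 + (lam / c) * J u) :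
    ∀ k : ℕ, 1 ≤ k → F (w k) - F wstar ≤ c * ‖w 0 - wstar‖ ^ 2 / (2 * k) := by
  have hstep_le : ∀ k u, F (w (k + 1)) ≤ F u + c / 2 * (‖w k - u‖ ^ 2 - ‖w (k + 1) - u‖ ^ 2) :=
    fun k u => by
      simpa only [hF] using ista_step_le hLconv hG hc hLip hJconv hlam (hstep k) u
  have hanti : Antitone (F ∘ w) := antitone_nat_of_succ_le fun k => by
    have := hstep_le k (w k)
    rw [sub_self, norm_zero, zero_pow two_ne_zero, zero_sub] at this
    show F (w (k + 1)) ≤ F (w k)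
    nlinarith [sq_nonneg ‖w (k + 1) - w k‖]
  intro k hk
  have := sub_le_div_of_antitone_of_succ_sub_le hanti (b := F wstar)
    (d := fun k => c / 2 * ‖w k - wstar‖ ^ 2) (fun k => by positivity)
    (fun k => by simp only [Function.comp_apply]; linarith [hstep_le k wstar]) hk
  calc F (w k) - F wstar ≤ c / 2 * ‖w 0 - wstar‖ ^ 2 / k := this
    _ = c * ‖w 0 - wstar‖ ^ 2 / (2 * k) := by ring

/-- ISTA `O(1/k)` convergence rate: for `F = L + λJ` with `L` convex
differentiable with `c`-Lipschitz gradient, `J` convex lsc, and a minimizer `w*`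
of `F`, the ISTA iterates satisfy `F(w⁽ᵏ⁾) − F(w*) ≤ c‖w⁽⁰⁾ − w*‖²/(2k)`. -/
theorem ista_convergence_rate (p : ℕ)
    (L : EuclideanSpace ℝ (Fin p) → ℝ) (hLconv : ConvexOn ℝ Set.univ L)
    (G : EuclideanSpace ℝ (Fin p) → EuclideanSpace ℝ (Fin p))
    (hG : ∀ w, HasGradientAt L (G w) w)
    (c : ℝ) (hc : 0 < c) (hLip : ∀ u v, ‖G u - G v‖ ≤ c * ‖u - v‖)
    (J : EuclideanSpace ℝ (Fin p) → ℝ) (hJconv : ConvexOn ℝ Set.univ J)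
    (hJlsc : LowerSemicontinuous J)
    (lam : ℝ) (hlam : 0 ≤ lam)
    (F : EuclideanSpace ℝ (Fin p) → ℝ) (hF : ∀ u, F u = L u + lam * J u)
    (wstar : EuclideanSpace ℝ (Fin p)) (hmin : ∀ u, F wstar ≤ F u)
    (w : ℕ → EuclideanSpace ℝ (Fin p))
    (hstep : ∀ k : ℕ, ∀ u,
      1 / 2 * ‖w (k + 1) - (w k - (1 / c) • G (w k))‖ ^ 2 + (lam / c) * J (w (k + 1))
        ≤ 1 / 2 * ‖u - (w k - (1 / c) • G (w k))‖ ^ 2 + (lam / c) * J u) :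
    ∀ k : ℕ, 1 ≤ k → F (w k) - F wstar ≤ c * ‖w 0 - wstar‖ ^ 2 / (2 * k) :=
  ista_convergence_rate_general p L hLconv G hG c hc hLip J hJconv lam hlam F hF wstar w hstep
end
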